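/- arXiv:1909.04798 — 6 statements merged into one kernel-verified Lean document; each statement's English description precedes it below -/
import Mathlib

section
/- Let $g(z; x, a') = \frac{|z + a'|}{\sqrt{z^2 + x^2}}$ for real $z, x$ with $a' \ge 2h > 0$. Then $\sup_{z : |z| \ge h} g(z; x, a') \le \frac{a' + h}{\sqrt{h^2 + x^2}} \mathbb{1}(|x| \le \sqrt{a'h}) + \sqrt{\frac{a' + h}{h}}\, \mathbb{1}(|x| > \sqrt{a'h})$. -/
/-!
Squaring reduces both bounds to polynomial inequalities. For `x² ≤ a'h` the map
`t ↦ (t + a')² / (t² + x²)` is decreasing on `[x² / a', ∞) ⊇ [h, ∞)`, and since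
`|z + a'| ≤ |z| + a'` the case `z ≤ -h` reduces to `z ≥ h`, so the supremum is attained at
`z = h`. For `x² ≥ a'h` the identity
`(a' + h)(z² + x²) - h(z + a')² = a'(z - h)² + (a' + h)(x² - a'h)` gives the bound for every `z`.
-/

open Real

theorem div_sqrt_le_div_sqrt {u v p q : ℝ} (hu : 0 ≤ u) (hv : 0 ≤ v) (hq : 0 < q)
    (h : u ^ 2 * q ≤ v ^ 2 * p) : u / √p ≤ v / √q := by
  rcases le_or_gt p 0 with hp | hp
  · rw [sqrt_eq_zero'.2 hp, div_zero]
    positivity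
  rw [div_le_div_iff₀ (sqrt_pos.2 hp) (sqrt_pos.2 hq)]
  calc u * √q = √(u ^ 2 * q) := by rw [sqrt_mul (sq_nonneg u), sqrt_sq hu]
    _ ≤ √(v ^ 2 * p) := sqrt_le_sqrt h
    _ = v * √p := by rw [sqrt_mul (sq_nonneg v), sqrt_sq hv]

section

variable {a h x : ℝ}

theorem sq_add_mul_le_of_sq_le_mul {t : ℝ} (ha : 0 ≤ a) (hh : 0 ≤ h) (ht : h ≤ t)
    (hx : x ^ 2 ≤ a * h) : (t + a) ^ 2 * (h ^ 2 + x ^ 2) ≤ (a + h) ^ 2 * (t ^ 2 + x ^ 2) := by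
  have hfactor : (a + h) ^ 2 * (t ^ 2 + x ^ 2) - (t + a) ^ 2 * (h ^ 2 + x ^ 2)
      = (t - h) * ((a ^ 2 + 2 * a * h - x ^ 2) * (t - h) + 2 * (a + h) * (a * h - x ^ 2)) := by
    ring
  have hcoeff : 0 ≤ a ^ 2 + 2 * a * h - x ^ 2 := by nlinarith [mul_nonneg ha hh]
  have hdt : 0 ≤ t - h := sub_nonneg.2 ht
  have hgap : 0 ≤ a * h - x ^ 2 := sub_nonneg.2 hx
  linarith [mul_nonneg hdt (add_nonneg (mul_nonneg hcoeff hdt)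
    (mul_nonneg (by positivity : 0 ≤ 2 * (a + h)) hgap))]

theorem sq_add_mul_le_of_mul_le_sq (z : ℝ) (ha : 0 ≤ a) (hh : 0 ≤ h) (hx : a * h ≤ x ^ 2) :
    (z + a) ^ 2 * h ≤ (a + h) * (z ^ 2 + x ^ 2) := by
  have hgap : (a + h) * (z ^ 2 + x ^ 2) - (z + a) ^ 2 * h
      = a * (z - h) ^ 2 + (a + h) * (x ^ 2 - a * h) := by
    ring
  linarith [mul_nonneg ha (sq_nonneg (z - h)),
    mul_nonneg (add_nonneg ha hh) (sub_nonneg.2 hx)]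

theorem abs_add_div_sqrt_le_of_sq_le_mul {z : ℝ} (ha : 0 ≤ a) (hh : 0 < h) (hz : h ≤ |z|)
    (hx : x ^ 2 ≤ a * h) : |z + a| / √(z ^ 2 + x ^ 2) ≤ (a + h) / √(h ^ 2 + x ^ 2) :=
  calc |z + a| / √(z ^ 2 + x ^ 2) ≤ (|z| + a) / √(|z| ^ 2 + x ^ 2) := by
        rw [sq_abs]
        gcongr
        exact (abs_add_le z a).trans_eq (by rw [abs_of_nonneg ha])
    _ ≤ (a + h) / √(h ^ 2 + x ^ 2) :=
        div_sqrt_le_div_sqrt (by positivity) (by positivity) (by positivity)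
          (sq_add_mul_le_of_sq_le_mul ha hh.le hz hx)

theorem abs_add_div_sqrt_le_sqrt_of_mul_le_sq (z : ℝ) (ha : 0 ≤ a) (hh : 0 < h)
    (hx : a * h ≤ x ^ 2) : |z + a| / √(z ^ 2 + x ^ 2) ≤ √((a + h) / h) := by
  rw [sqrt_div' _ hh.le]
  refine div_sqrt_le_div_sqrt (abs_nonneg _) (sqrt_nonneg _) hh ?_
  rw [sq_abs, sq_sqrt (by positivity)]
  exact sq_add_mul_le_of_mul_le_sq z ha hh.le hx

end

/-- Bound on `g(z; x, a') = |z + a'| / √(z² + x²)` over `|z| ≥ h`, for `a' ≥ 2h > 0`. -/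
theorem stmt_4 (h a' x : ℝ) (hh : 0 < h) (ha : 2 * h ≤ a')
    (z : ℝ) (hz : h ≤ |z|) :
    |z + a'| / Real.sqrt (z ^ 2 + x ^ 2) ≤
      (if |x| ≤ Real.sqrt (a' * h) then (a' + h) / Real.sqrt (h ^ 2 + x ^ 2)
       else Real.sqrt ((a' + h) / h)) := by
  have ha' : 0 ≤ a' := by linarith
  split_ifs with hx
  · refine abs_add_div_sqrt_le_of_sq_le_mul ha' hh hz ?_
    simpa only [sq_abs] using (le_sqrt (abs_nonneg x) (by positivity)).1 hx
  · exact abs_add_div_sqrt_le_sqrt_of_mul_le_sq z ha' hh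
      (le_of_not_ge fun hsq => hx (abs_le_sqrt hsq))
end

section
/- Let $F(x) = x^2 e^x$ on $(0,\infty)$. Then $F^{-1}(x)$ is increasing in $x$, and $F^{-1}(x)/\sqrt{x}$ is decreasing in $x$. Moreover for any $x_0 \ge e$ and any $0 < x \le x_0$, $F^{-1}(x) \ge \sqrt{x/x_0}$, and for any $x > e$, $F^{-1}(x) \ge \log x - 2\log\log x$. -/
/-!
Write `x = y² eʸ` with `y = F⁻¹(x)`. Since `√x = y e^{y/2}`,
`F⁻¹(x)/√x = e^{-y/2}`, which decreases as `y` grows. For `x ≤ x₀` with `x₀ ≥ e` one has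
`eʸ ≤ x₀` (trivially if `y ≤ 1`, and from `eʸ ≤ y² eʸ = x` otherwise), hence `x/x₀ ≤ y²`.
Finally `log x = y + 2 log y` with `y ≥ 1` when `x ≥ e`, so `y ≤ log x` and therefore
`log x - 2 log log x ≤ log x - 2 log y = y`.
-/

open Real Set

lemma strictMonoOn_sq_mul_exp : StrictMonoOn (fun y : ℝ => y ^ 2 * exp y) (Ici 0) := by
  intro a ha b _ hab
  have hsq : a ^ 2 < b ^ 2 := pow_lt_pow_left₀ hab ha two_ne_zero
  have hexp : exp a < exp b := exp_lt_exp.mpr hab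
  exact mul_lt_mul'' hsq hexp (sq_nonneg a) (exp_pos a).le

lemma sq_mul_exp_le_sq_mul_exp_iff {a b : ℝ} (ha : 0 ≤ a) (hb : 0 ≤ b) :
    a ^ 2 * exp a ≤ b ^ 2 * exp b ↔ a ≤ b :=
  strictMonoOn_sq_mul_exp.le_iff_le ha hb

lemma sqrt_sq_mul_exp {y : ℝ} (hy : 0 ≤ y) : √(y ^ 2 * exp y) = y * exp (y / 2) := by
  have hsq : y ^ 2 * exp y = (y * exp (y / 2)) ^ 2 := by
    rw [mul_pow, ← exp_nat_mul]
    ring_nf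
  rw [hsq, sqrt_sq (by positivity)]

lemma div_sqrt_sq_mul_exp {y : ℝ} (hy : 0 < y) : y / √(y ^ 2 * exp y) = exp (-(y / 2)) := by
  rw [sqrt_sq_mul_exp hy.le, exp_neg]
  field_simp

lemma exp_le_of_sq_mul_exp_le {y c : ℝ} (hc : exp 1 ≤ c) (h : y ^ 2 * exp y ≤ c) :
    exp y ≤ c := by
  rcases le_or_gt y 1 with hy | hy
  · exact (exp_le_exp.mpr hy).trans hc
  · have hy2 : 1 ≤ y ^ 2 := one_le_pow₀ hy.le
    calc exp y ≤ y ^ 2 * exp y := le_mul_of_one_le_left (exp_pos y).le hy2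
      _ ≤ c := h

lemma log_sq_mul_exp {y : ℝ} (hy : 0 < y) : log (y ^ 2 * exp y) = y + 2 * log y := by
  rw [log_mul (by positivity) (exp_ne_zero y), log_pow, log_exp]
  push_cast
  ring

lemma log_sub_two_mul_log_log_le {y : ℝ} (hy : 1 ≤ y) :
    log (y ^ 2 * exp y) - 2 * log (log (y ^ 2 * exp y)) ≤ y := by
  have hlog := log_sq_mul_exp (one_pos.trans_le hy)
  have hlogy : 0 ≤ log y := log_nonneg hy
  have hle : log y ≤ log (log (y ^ 2 * exp y)) :=
    log_le_log (one_pos.trans_le hy) (by rw [hlog]; linarith)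
  linarith

/-- Properties of the inverse of `F(x) = x² eˣ` on `(0, ∞)`, expressed via the defining
relation `F y = x` with `y > 0`: `F⁻¹` is increasing, `F⁻¹(x)/√x` is decreasing,
`F⁻¹(x) ≥ √(x/x₀)` for `x ≤ x₀` with `x₀ ≥ e`, and `F⁻¹(x) ≥ log x - 2 log log x` for `x > e`. -/
theorem stmt_7 :
    (∀ x1 x2 y1 y2 : ℝ, 0 < x1 → 0 < x2 → 0 < y1 → 0 < y2 →
      y1 ^ 2 * Real.exp y1 = x1 → y2 ^ 2 * Real.exp y2 = x2 → x1 ≤ x2 → y1 ≤ y2) ∧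
    (∀ x1 x2 y1 y2 : ℝ, 0 < x1 → 0 < x2 → 0 < y1 → 0 < y2 →
      y1 ^ 2 * Real.exp y1 = x1 → y2 ^ 2 * Real.exp y2 = x2 → x1 ≤ x2 →
      y2 / Real.sqrt x2 ≤ y1 / Real.sqrt x1) ∧
    (∀ x0 x y : ℝ, Real.exp 1 ≤ x0 → 0 < x → x ≤ x0 → 0 < y →
      y ^ 2 * Real.exp y = x → Real.sqrt (x / x0) ≤ y) ∧
    (∀ x y : ℝ, Real.exp 1 < x → 0 < y → y ^ 2 * Real.exp y = x →
      Real.log x - 2 * Real.log (Real.log x) ≤ y) := by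
  refine ⟨?mono, ?antitone_div_sqrt, ?sqrt_div_le, ?log_sub_le⟩
  case mono =>
    rintro x1 x2 y1 y2 - - hy1 hy2 rfl rfl h
    exact (sq_mul_exp_le_sq_mul_exp_iff hy1.le hy2.le).mp h
  case antitone_div_sqrt =>
    rintro x1 x2 y1 y2 - - hy1 hy2 rfl rfl h
    have hy : y1 ≤ y2 := (sq_mul_exp_le_sq_mul_exp_iff hy1.le hy2.le).mp h
    rw [div_sqrt_sq_mul_exp hy1, div_sqrt_sq_mul_exp hy2, exp_le_exp]
    linarith
  case sqrt_div_le =>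
    rintro x0 x y he - hxx0 hy rfl
    have hx0 : 0 < x0 := (exp_pos 1).trans_le he
    have hey : exp y ≤ x0 := exp_le_of_sq_mul_exp_le he hxx0
    rw [sqrt_le_left hy.le, div_le_iff₀ hx0]
    exact mul_le_mul_of_nonneg_left hey (sq_nonneg y)
  case log_sub_le =>
    rintro x y hex hy rfl
    have hy1 : 1 ≤ y := by
      rw [← sq_mul_exp_le_sq_mul_exp_iff zero_le_one hy.le, one_pow, one_mul]
      exact hex.le
    exact log_sub_two_mul_log_log_le hy1
end

section
/- Let $X_1,\dots,X_n$ be independent Bernoulli random variables with $\mathbb{E}X_i = p_i$, let $w \in \mathbb{R}^n$ with $\|w\|_\infty = \max_i |w_i|$, and set $S_n = \sum_{i=1}^n w_i (X_i - p_i)$. Define $\Omega = \|w\|_\infty^2 / \sum_{i=1}^n p_i w_i^2$ and $F(x) = x^2 e^x$. Then for any $\delta \in (0,1)$, with probability at least $1 - \delta$, $S_n \le \frac{2\log(1/\delta)}{F^{-1}(2\Omega \log(1/\delta))}\|w\|_\infty$. -/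
/-!
Chernoff's method with the exponent `λ = y / ‖w‖_∞`. Since `|λ wᵢ| ≤ y`, the second-order Taylor
bound `eᵃ - 1 - a ≤ a²/2 · e^y` together with `1 + x ≤ eˣ` bounds the moment generating function
of each summand `wᵢ (Xᵢ - pᵢ)` at `λ` by `exp (λ²/2 · e^y · pᵢ wᵢ²)`. By independence the moment
generating function of `Sₙ` is at most `exp (λ²/2 · e^y · ∑ pᵢ wᵢ²)`, which the defining equation
`y² e^y = 2 Ω log(1/δ)` makes equal to `1/δ`; the threshold `2 log(1/δ) ‖w‖_∞ / y` is `2 log(1/δ) / λ`,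
so the Chernoff bound gives `P(Sₙ ≥ threshold) ≤ δ² · (1/δ) = δ`.
-/

open MeasureTheory ProbabilityTheory Real Set

theorem Real.exists_exp_sub_one_sub_eq {u : ℝ} (hu : u ≠ 0) :
    ∃ ξ ∈ uIoo 0 u, exp u - 1 - u = exp ξ * u ^ 2 / 2 := by
  obtain ⟨ξ, hξ, h⟩ := taylor_mean_remainder_lagrange_iteratedDeriv (n := 1) (f := exp) hu.symm
    contDiff_exp.contDiffOn
  have hderiv : derivWithin exp (uIcc 0 u) 0 = 1 := by
    rw [differentiableAt_exp.derivWithin (uniqueDiffOn_uIcc hu.symm 0 left_mem_uIcc),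
      Real.deriv_exp, exp_zero]
  simp only [taylorWithinEval_succ, taylor_within_zero_eval, iteratedDerivWithin_one, hderiv,
    iteratedDeriv_succ, iteratedDeriv_zero, Real.deriv_exp, exp_zero, Nat.factorial, Nat.cast_one,
    Nat.reduceAdd, smul_eq_mul, sub_zero, pow_one, mul_one] at h
  exact ⟨ξ, hξ, by linarith⟩

theorem Real.exp_sub_one_sub_le_of_abs_le {u v : ℝ} (h : |u| ≤ v) :
    exp u - 1 - u ≤ u ^ 2 / 2 * exp v := by
  rcases eq_or_ne u 0 with rfl | hu
  · simp
  obtain ⟨ξ, hξ, heq⟩ := exists_exp_sub_one_sub_eq hu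
  have hξv : ξ ≤ v := calc
    ξ ≤ max 0 u := hξ.2.le
    _ ≤ |u| := max_le (abs_nonneg u) (le_abs_self u)
    _ ≤ v := h
  rw [heq, mul_div_assoc, mul_comm]
  gcongr

theorem Real.bernoulli_mgf_le (p a : ℝ) :
    p * exp (a * (1 - p)) + (1 - p) * exp (a * (0 - p)) ≤ exp (p * (exp a - 1 - a)) := calc
  p * exp (a * (1 - p)) + (1 - p) * exp (a * (0 - p))
      = exp (-(a * p)) * (1 + p * (exp a - 1)) := by
    rw [show a * (1 - p) = a + -(a * p) by ring, show a * (0 - p) = -(a * p) by ring, exp_add]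
    ring
  _ ≤ exp (-(a * p)) * exp (p * (exp a - 1)) := by
    gcongr
    linarith [add_one_le_exp (p * (exp a - 1))]
  _ = exp (p * (exp a - 1 - a)) := by rw [← exp_add]; ring_nf

theorem comp_eq_indicator_add_of_forall_eq_zero_or_one {Ω : Type*} {X : Ω → ℝ} (h01 : ∀ ω, X ω = 0 ∨ X ω = 1)
    (f : ℝ → ℝ) :
    (fun ω ↦ f (X ω)) = fun ω ↦ {ω | X ω = 1}.indicator (fun _ ↦ f 1 - f 0) ω + f 0 := by
  funext ω
  rcases h01 ω with h | h <;> simp [h]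

section Bernoulli

variable {Ω : Type*} [MeasurableSpace Ω] {μ : Measure Ω} [IsProbabilityMeasure μ] {X : Ω → ℝ}

theorem integrable_comp_of_forall_eq_zero_or_one (hX : Measurable X)
    (h01 : ∀ ω, X ω = 0 ∨ X ω = 1) (f : ℝ → ℝ) : Integrable (fun ω ↦ f (X ω)) μ := by
  rw [comp_eq_indicator_add_of_forall_eq_zero_or_one h01]
  exact ((integrable_const _).indicator (hX (measurableSet_singleton 1))).add (integrable_const _)

theorem integral_comp_of_forall_eq_zero_or_one (hX : Measurable X)
    (h01 : ∀ ω, X ω = 0 ∨ X ω = 1) (f : ℝ → ℝ) :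
    ∫ ω, f (X ω) ∂μ = μ.real {ω | X ω = 1} * f 1 + (1 - μ.real {ω | X ω = 1}) * f 0 := by
  have hs : MeasurableSet {ω | X ω = 1} := hX (measurableSet_singleton 1)
  rw [comp_eq_indicator_add_of_forall_eq_zero_or_one h01,
    integral_add ((integrable_const _).indicator hs) (integrable_const _),
    integral_indicator_const _ hs, integral_const, probReal_univ]
  simp only [smul_eq_mul]
  ring

theorem mgf_mul_sub_le_of_forall_eq_zero_or_one (hX : Measurable X)
    (h01 : ∀ ω, X ω = 0 ∨ X ω = 1) {p : ℝ} (hp : μ.real {ω | X ω = 1} = p) {c t v : ℝ}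
    (hv : |t * c| ≤ v) :
    mgf (fun ω ↦ c * (X ω - p)) μ t ≤ exp (t ^ 2 / 2 * exp v * (p * c ^ 2)) := by
  have hp0 : 0 ≤ p := hp ▸ measureReal_nonneg
  calc mgf (fun ω ↦ c * (X ω - p)) μ t
      = p * exp (t * c * (1 - p)) + (1 - p) * exp (t * c * (0 - p)) := by
        rw [mgf, integral_comp_of_forall_eq_zero_or_one hX h01 (fun x ↦ exp (t * (c * (x - p)))),
          hp]
        ring_nf
    _ ≤ exp (p * (exp (t * c) - 1 - t * c)) := bernoulli_mgf_le p (t * c)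
    _ ≤ exp (t ^ 2 / 2 * exp v * (p * c ^ 2)) := by
        refine exp_le_exp.2 ?_
        calc p * (exp (t * c) - 1 - t * c) ≤ p * ((t * c) ^ 2 / 2 * exp v) := by
              gcongr
              exact exp_sub_one_sub_le_of_abs_le hv
          _ = t ^ 2 / 2 * exp v * (p * c ^ 2) := by ring

end Bernoulli

section WeightedSum

variable {Ω ι : Type*} [MeasurableSpace Ω] {μ : Measure Ω} [IsProbabilityMeasure μ] [Fintype ι]
  {X : ι → Ω → ℝ}

theorem measureReal_le_weighted_sum_le_exp (hX : ∀ i, Measurable (X i)) (hind : iIndepFun X μ)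
    (h01 : ∀ i ω, X i ω = 0 ∨ X i ω = 1) {p w : ι → ℝ}
    (hp : ∀ i, μ.real {ω | X i ω = 1} = p i) {t v : ℝ} (ht : 0 ≤ t) (hv : ∀ i, |t * w i| ≤ v)
    (ε : ℝ) :
    μ.real {ω | ε ≤ ∑ i, w i * (X i ω - p i)} ≤
      exp (-t * ε + t ^ 2 / 2 * exp v * ∑ i, p i * w i ^ 2) := by
  set Y : ι → Ω → ℝ := fun i ω ↦ w i * (X i ω - p i)
  have hYmeas : ∀ i, Measurable (Y i) := fun i ↦ ((hX i).sub_const _).const_mul _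
  have hYind : iIndepFun Y μ :=
    hind.comp (fun i x ↦ w i * (x - p i)) fun i ↦ (measurable_id.sub_const _).const_mul _
  have hYint : ∀ i, Integrable (fun ω ↦ exp (t * Y i ω)) μ := fun i ↦
    integrable_comp_of_forall_eq_zero_or_one (hX i) (h01 i) (fun x ↦ exp (t * (w i * (x - p i))))
  have hmgf : mgf (∑ i, Y i) μ t ≤ exp (t ^ 2 / 2 * exp v * ∑ i, p i * w i ^ 2) := calc
    mgf (∑ i, Y i) μ t = ∏ i, mgf (Y i) μ t := hYind.mgf_sum hYmeas _
    _ ≤ ∏ i, exp (t ^ 2 / 2 * exp v * (p i * w i ^ 2)) :=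
        Finset.prod_le_prod (fun _ _ ↦ mgf_nonneg) fun i _ ↦
          mgf_mul_sub_le_of_forall_eq_zero_or_one (hX i) (h01 i) (hp i) (hv i)
    _ = exp (t ^ 2 / 2 * exp v * ∑ i, p i * w i ^ 2) := by rw [← exp_sum, Finset.mul_sum]
  calc μ.real {ω | ε ≤ ∑ i, w i * (X i ω - p i)} = μ.real {ω | ε ≤ (∑ i, Y i) ω} := by
        simp only [Y, Finset.sum_apply]
    _ ≤ exp (-t * ε) * mgf (∑ i, Y i) μ t :=
        measure_ge_le_exp_mul_mgf ε ht (hYind.integrable_exp_mul_sum hYmeas fun i _ ↦ hYint i)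
    _ ≤ exp (-t * ε) * exp (t ^ 2 / 2 * exp v * ∑ i, p i * w i ^ 2) := by gcongr
    _ = exp (-t * ε + t ^ 2 / 2 * exp v * ∑ i, p i * w i ^ 2) := (exp_add _ _).symm

end WeightedSum

theorem ofReal_one_sub_le_measure_le_of_measureReal_ge_le {Ω : Type*} [MeasurableSpace Ω]
    {μ : Measure Ω} [IsProbabilityMeasure μ] {f : Ω → ℝ} {ε δ : ℝ}
    (h : μ.real {ω | ε ≤ f ω} ≤ δ) : ENNReal.ofReal (1 - δ) ≤ μ {ω | f ω ≤ ε} := by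
  have hδ : 0 ≤ δ := measureReal_nonneg.trans h
  have hcover : 1 ≤ μ {ω | f ω ≤ ε} + μ {ω | ε ≤ f ω} := calc
    1 = μ (univ : Set Ω) := measure_univ.symm
    _ ≤ μ ({ω | f ω ≤ ε} ∪ {ω | ε ≤ f ω}) := measure_mono fun ω _ ↦ le_total (f ω) ε
    _ ≤ _ := measure_union_le _ _
  have htail : μ {ω | ε ≤ f ω} ≤ ENNReal.ofReal δ := by
    rw [← ofReal_measureReal]
    exact ENNReal.ofReal_le_ofReal h
  rw [ENNReal.ofReal_sub _ hδ, ENNReal.ofReal_one, tsub_le_iff_right]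
  exact hcover.trans (by gcongr)

theorem stmt_8_general {Ω : Type*} [MeasurableSpace Ω] (μ : Measure Ω) [IsProbabilityMeasure μ]
    {n : ℕ} (X : Fin n → Ω → ℝ) (p : Fin n → ℝ) (w : Fin n → ℝ)
    (hmeas : ∀ i, Measurable (X i))
    (hind : iIndepFun X μ)
    (hval : ∀ i ω, X i ω = 0 ∨ X i ω = 1)
    (hpX : ∀ i, (μ {ω | X i ω = 1}).toReal = p i)
    (hpos : 0 < ∑ i, p i * w i ^ 2)
    (δ : ℝ) (hδ : δ ∈ Set.Ioo (0 : ℝ) 1)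
    (y : ℝ) (hy : 0 < y)
    (hFy : y ^ 2 * Real.exp y
      = 2 * ((⨆ i, |w i|) ^ 2 / ∑ i, p i * w i ^ 2) * Real.log (1 / δ)) :
    ENNReal.ofReal (1 - δ) ≤
      μ {ω | ∑ i, w i * (X i ω - p i) ≤ 2 * Real.log (1 / δ) / y * (⨆ i, |w i|)} := by
  set M := ⨆ i, |w i|
  set L := Real.log (1 / δ)
  have hwM : ∀ i, |w i| ≤ M := le_ciSup (finite_range _).bddAbove
  obtain ⟨i, hi⟩ : ∃ i, w i ≠ 0 := by
    by_contra! h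
    simp [h] at hpos
  have hM : 0 < M := (abs_pos.2 hi).trans_le (hwM i)
  have hv : ∀ i, |y / M * w i| ≤ y := fun i ↦ by
    rw [abs_mul, abs_of_pos (div_pos hy hM), div_mul_comm]
    exact mul_le_of_le_one_left hy.le ((div_le_one hM).2 (hwM i))
  have hexponent : -(y / M) * (2 * L / y * M) + (y / M) ^ 2 / 2 * exp y * ∑ i, p i * w i ^ 2
      = -L := by
    rw [show (y / M) ^ 2 / 2 * exp y * ∑ i, p i * w i ^ 2
        = y ^ 2 * exp y * (∑ i, p i * w i ^ 2) / (2 * M ^ 2) by ring, hFy]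
    field_simp
    ring
  apply ofReal_one_sub_le_measure_le_of_measureReal_ge_le
  calc _ ≤ exp (-L) := hexponent ▸ measureReal_le_weighted_sum_le_exp hmeas hind hval hpX
          (div_pos hy hM).le hv _
    _ = δ := by rw [exp_neg, exp_log (one_div_pos.2 hδ.1), one_div, inv_inv]

/-- Bernstein-type bound for a weighted sum of independent Bernoulli variables:
with probability at least `1 - δ`,
`Sₙ ≤ (2 log(1/δ) / F⁻¹(2Ω log(1/δ))) ‖w‖_∞`, where `Ω = ‖w‖_∞² / ∑ pᵢ wᵢ²` and
`F(x) = x² eˣ`; the inverse `F⁻¹` is expressed via `y` satisfying `F y = 2Ω log(1/δ)`. -/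
theorem stmt_8 {Ω : Type*} [MeasurableSpace Ω] (μ : Measure Ω) [IsProbabilityMeasure μ]
    {n : ℕ} (hn : 0 < n) (X : Fin n → Ω → ℝ) (p : Fin n → ℝ) (w : Fin n → ℝ)
    (hmeas : ∀ i, Measurable (X i))
    (hind : iIndepFun X μ)
    (hval : ∀ i ω, X i ω = 0 ∨ X i ω = 1)
    (hp01 : ∀ i, p i ∈ Set.Icc (0 : ℝ) 1)
    (hpX : ∀ i, (μ {ω | X i ω = 1}).toReal = p i)
    (hpos : 0 < ∑ i, p i * w i ^ 2)
    (δ : ℝ) (hδ : δ ∈ Set.Ioo (0 : ℝ) 1)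
    (y : ℝ) (hy : 0 < y)
    (hFy : y ^ 2 * Real.exp y
      = 2 * ((⨆ i, |w i|) ^ 2 / ∑ i, p i * w i ^ 2) * Real.log (1 / δ)) :
    ENNReal.ofReal (1 - δ) ≤
      μ {ω | ∑ i, w i * (X i ω - p i) ≤ 2 * Real.log (1 / δ) / y * (⨆ i, |w i|)} :=
  stmt_8_general μ X p w hmeas hind hval hpX hpos δ hδ y hy hFy
end

section
/- Let $\lambda^*_{s+r} > \lambda^*_{s+r+1}$ (with convention $\lambda_0^* = \infty$) be a decreasing sequence of positive eigenvalues indexed by $t = s+r, \dots, s+1$, with gaps $g_t^* = \lambda_t^* - \max\{\lambda_{t+1}^*, 0\}$. Define recursively $t_0 = s+r$ and $t_\ell = \max\{s < t < t_{\ell-1} : g_t^* > 2 g_{t_{\ell-1}}^*,\ \lambda_t^* > 2\lambda_{t_{\ell-1}}^*\}$, stopping at $B = \min\{\ell : t_\ell \text{ does not exist}\}$ with $t_B = s$. Then $B \le \min\{r, 1 + \log_2 \kappa^*\}$ where $\kappa^* = \lambda_{s+1}^*/\lambda_{s+r}^*$, and each block $S_j = \{t_{j-1}, \dots, t_j + 1\}$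 has condition number $\kappa_j^* = \lambda_{t_j+1}^*/\lambda_{t_{j-1}}^* \le 2|S_j|$. -/
/-!
The indices `t₀ > t₁ > ⋯ > t_B = s` strictly decrease from `s + r`, so `B ≤ r`, and each
selected eigenvalue more than doubles the previous one, so `2^(B-1) λ*_{s+r} ≤ λ*_{s+1}`.
Inside a block `S_j` with top index `b = t_{j-1}`, maximality of `t_j` says that every `u`
strictly between `t_j` and `b` has `g_u ≤ 2 g_b` or `λ_u ≤ 2 λ_b`. Walking down from `b`,
each step therefore adds at most `2 g_b ≤ 2 λ_b` to the bound `λ_u ≤ 2 (b - u) g_b + 2 λ_b`,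
unless it resets the bound to `2 λ_b`.
-/

theorem apply_add_le_apply_zero {t : ℕ → ℕ} {B : ℕ} (h : ∀ ℓ < B, t (ℓ + 1) < t ℓ) :
    ∀ ℓ ≤ B, t ℓ + ℓ ≤ t 0 := by
  intro ℓ hℓ
  induction ℓ with
  | zero => simp
  | succ n ih => have := h n hℓ; have := ih (by omega); omega

theorem pow_mul_le_of_mul_le_succ {R : Type*} [Semiring R] [PartialOrder R] [IsOrderedRing R]
    {c : R} (hc : 0 ≤ c) {a : ℕ → R} {n : ℕ} (h : ∀ ℓ < n, c * a ℓ ≤ a (ℓ + 1)) :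
    ∀ ℓ ≤ n, c ^ ℓ * a 0 ≤ a ℓ := by
  intro ℓ hℓ
  induction ℓ with
  | zero => simp
  | succ k ih =>
    calc c ^ (k + 1) * a 0 = c * (c ^ k * a 0) := by rw [pow_succ', mul_assoc]
      _ ≤ c * a k := mul_le_mul_of_nonneg_left (ih (by omega)) hc
      _ ≤ a (k + 1) := h k hℓ

theorem natCast_le_one_add_logb_two_div {x y : ℝ} (hx : 0 < x) {n : ℕ} (hn : 0 < n)
    (h : 2 ^ (n - 1) * x ≤ y) : (n : ℝ) ≤ 1 + Real.logb 2 (y / x) := by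
  have hpow : (2 : ℝ) ^ (n - 1) ≤ y / x := (le_div_iff₀ hx).2 h
  have hy : 0 < y / x := lt_of_lt_of_le (by positivity) hpow
  rw [← Real.rpow_natCast, ← Real.le_logb_iff_rpow_le one_lt_two hy, Nat.cast_sub hn] at hpow
  push_cast at hpow
  linarith

theorem le_two_mul_mul_add_of_step {lam : ℕ → ℝ} {a b : ℕ} {G L : ℝ} (hG : 0 ≤ G)
    (hb : lam b ≤ 2 * L)
    (hstep : ∀ u, a < u → u < b → lam u - lam (u + 1) ≤ 2 * G ∨ lam u ≤ 2 * L) :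
    ∀ k : ℕ, a < b - k → lam (b - k) ≤ 2 * k * G + 2 * L := by
  intro k hk
  induction k with
  | zero => simpa using hb
  | succ k ih =>
    have hsucc : b - (k + 1) + 1 = b - k := by omega
    have ih := ih (by omega)
    push_cast
    rcases hstep (b - (k + 1)) hk (by omega) with hg | hl
    · rw [hsucc] at hg; linarith
    · nlinarith

theorem div_le_two_mul_sub_of_step {lam g : ℕ → ℝ} {a b : ℕ} (hab : a < b)
    (hg : ∀ u, a < u → u ≤ b → g u = lam u - max (lam (u + 1)) 0)
    (hpos : ∀ u, a < u → u ≤ b → 0 < lam u) (hmono : lam (b + 1) ≤ lam b)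
    (hsplit : ∀ u, a < u → u < b → g u ≤ 2 * g b ∨ lam u ≤ 2 * lam b) :
    lam (a + 1) / lam b ≤ 2 * ((b : ℝ) - a) := by
  have hlam_b := hpos b hab le_rfl
  have hgb_nonneg : 0 ≤ g b := by
    rw [hg b hab le_rfl]; exact sub_nonneg.2 (max_le hmono hlam_b.le)
  have hgb_le : g b ≤ lam b := by rw [hg b hab le_rfl]; linarith [le_max_right (lam (b + 1)) 0]
  have hstep :
      ∀ u, a < u → u < b → lam u - lam (u + 1) ≤ 2 * g b ∨ lam u ≤ 2 * lam b := by
    intro u hau hub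
    rw [← max_eq_left (hpos (u + 1) (by omega) hub).le, ← hg u hau hub.le]
    exact hsplit u hau hub
  have hwalk :=
    le_two_mul_mul_add_of_step hgb_nonneg (by linarith) hstep (b - (a + 1)) (by omega)
  rw [Nat.sub_sub_self hab, Nat.cast_sub hab] at hwalk
  have hlen : (1 : ℝ) ≤ (b : ℝ) - a := by
    rw [le_sub_iff_add_le, add_comm]; exact_mod_cast hab
  rw [div_le_iff₀ hlam_b]
  push_cast at hwalk
  nlinarith

theorem stmt_11_general (s r : ℕ) (hr : 0 < r) (lam : ℕ → ℝ)
    (hpos : ∀ u, s + 1 ≤ u → u ≤ s + r → 0 < lam u)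
    (hmono : ∀ u v, s + 1 ≤ u → u ≤ v → v ≤ s + r + 1 → lam v ≤ lam u)
    (g : ℕ → ℝ) (hg : ∀ u, g u = lam u - max (lam (u + 1)) 0)
    (B : ℕ) (t : ℕ → ℕ)
    (ht0 : t 0 = s + r) (htB : t B = s)
    (hrec : ∀ ℓ, 1 ≤ ℓ → ℓ < B →
      (s < t ℓ ∧ t ℓ < t (ℓ - 1) ∧
        g (t ℓ) > 2 * g (t (ℓ - 1)) ∧ lam (t ℓ) > 2 * lam (t (ℓ - 1))) ∧
      (∀ u, s < u → u < t (ℓ - 1) →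
        g u > 2 * g (t (ℓ - 1)) → lam u > 2 * lam (t (ℓ - 1)) → u ≤ t ℓ))
    (hstop : ∀ u, s < u → u < t (B - 1) →
      ¬(g u > 2 * g (t (B - 1)) ∧ lam u > 2 * lam (t (B - 1)))) :
    (B ≤ r ∧ (B : ℝ) ≤ 1 + Real.logb 2 (lam (s + 1) / lam (s + r))) ∧
    (∀ j, 1 ≤ j → j ≤ B →
      lam (t j + 1) / lam (t (j - 1)) ≤ 2 * ((t (j - 1) : ℝ) - (t j : ℝ))) := by
  have hB : 0 < B := Nat.pos_of_ne_zero fun h => by subst h; omega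
  have hgt : ∀ ℓ < B, s < t ℓ := fun ℓ hℓ => by
    rcases Nat.eq_zero_or_pos ℓ with rfl | h
    · omega
    · exact (hrec ℓ h hℓ).1.1
  have hdec : ∀ ℓ < B, t (ℓ + 1) < t ℓ := fun ℓ hℓ => by
    rcases Nat.lt_or_ge (ℓ + 1) B with h | h
    · simpa using (hrec (ℓ + 1) (by omega) h).1.2.1
    · rw [show ℓ + 1 = B by omega, htB]; exact hgt ℓ hℓ
  have hlen := apply_add_le_apply_zero hdec
  have hgrowth := pow_mul_le_of_mul_le_succ (a := fun ℓ => lam (t ℓ)) zero_le_two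
    (n := B - 1) fun ℓ hℓ => by simpa using ((hrec (ℓ + 1) (by omega) (by omega)).1.2.2.2).le
  refine ⟨⟨by have := hlen B le_rfl; omega, ?_⟩, fun j hj hjB => ?_⟩
  · refine natCast_le_one_add_logb_two_div (hpos _ (by omega) le_rfl) hB ?_
    have := hlen (B - 1) (by omega)
    simpa [ht0] using (hgrowth (B - 1) le_rfl).trans
      (hmono (s + 1) (t (B - 1)) le_rfl (hgt (B - 1) (by omega)) (by omega))
  · have hsj : s ≤ t j := by
      rcases hjB.lt_or_eq with h | rfl
      · exact (hgt j h).le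
      · exact htB.ge
    have hlenj := hlen (j - 1) (by omega)
    refine div_le_two_mul_sub_of_step
      (by simpa [show j - 1 + 1 = j by omega] using hdec (j - 1) (by omega))
      (fun u _ _ => hg u) (fun u _ _ => hpos u (by omega) (by omega))
      (hmono _ _ (by have := hgt (j - 1) (by omega); omega) (Nat.le_succ _) (by omega))
      fun u hau hub => ?_
    by_contra! hbig
    rcases hjB.lt_or_eq with h | rfl
    · have := (hrec j hj h).2 u (by omega) hub hbig.1 hbig.2
      omega
    · exact hstop u (by omega) hub hbig

/-- Properties of the pre-conditioned eigen-partition for positive eigenvalues: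
the number of blocks satisfies `B ≤ min{r, 1 + log₂ κ*}` and each block has
condition number `κⱼ* ≤ 2|Sⱼ|`. -/
theorem stmt_11 (s r : ℕ) (hr : 0 < r) (lam : ℕ → ℝ)
    (hpos : ∀ u, s + 1 ≤ u → u ≤ s + r → 0 < lam u)
    (hmono : ∀ u v, s + 1 ≤ u → u ≤ v → v ≤ s + r + 1 → lam v ≤ lam u)
    (g : ℕ → ℝ) (hg : ∀ u, g u = lam u - max (lam (u + 1)) 0)
    (B : ℕ) (hB : 0 < B) (t : ℕ → ℕ)
    (ht0 : t 0 = s + r) (htB : t B = s)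
    (hrec : ∀ ℓ, 1 ≤ ℓ → ℓ < B →
      (s < t ℓ ∧ t ℓ < t (ℓ - 1) ∧
        g (t ℓ) > 2 * g (t (ℓ - 1)) ∧ lam (t ℓ) > 2 * lam (t (ℓ - 1))) ∧
      (∀ u, s < u → u < t (ℓ - 1) →
        g u > 2 * g (t (ℓ - 1)) → lam u > 2 * lam (t (ℓ - 1)) → u ≤ t ℓ))
    (hstop : ∀ u, s < u → u < t (B - 1) →
      ¬(g u > 2 * g (t (B - 1)) ∧ lam u > 2 * lam (t (B - 1)))) :
    (B ≤ r ∧ (B : ℝ) ≤ 1 + Real.logb 2 (lam (s + 1) / lam (s + r))) ∧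
    (∀ j, 1 ≤ j → j ≤ B →
      lam (t j + 1) / lam (t (j - 1)) ≤ 2 * ((t (j - 1) : ℝ) - (t j : ℝ))) :=
  stmt_11_general s r hr lam hpos hmono g hg B t ht0 htB hrec hstop
end

section
/- Let $A$ be a real symmetric $n\times n$ matrix with entries in $[0,1]$, and let $u_1$ be a unit eigenvector of $A$ corresponding to its largest eigenvalue in absolute value. For $i < j$, let $A^{(ij)}$ be $A$ with its $(i,j)$ and $(j,i)$ entries replaced by a value $A'_{ij} \in [0,1]$ (keeping symmetry). Then $\|A\|_{\mathrm{op}} - \|A^{(ij)}\|_{\mathrm{op}} \le 2|u_{1i}||u_{1j}||A_{ij} - A'_{ij}|$. -/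
/-!
Testing the spectral norms against the top eigenvector `u` of `A` gives `‖A‖ = |uᵀ A u|` and
`‖A'‖ ≥ |uᵀ A' u|`, so `‖A‖ - ‖A'‖ ≤ |uᵀ (A - A') u|`. The symmetric matrix `A - A'` vanishes
off the entries `(i, j)` and `(j, i)`, so this quadratic form has at most two nonzero terms, each
of absolute value `|uᵢ| |uⱼ| |Aᵢⱼ - A'ᵢⱼ|`.
-/

open Matrix

/-- The spectral (ℓ²-operator) norm of a square real matrix. -/
noncomputable def opNorm {n : ℕ} (M : Matrix (Fin n) (Fin n) ℝ) : ℝ :=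
  ‖Matrix.toEuclideanCLM (𝕜 := ℝ) M‖

theorem abs_dotProduct_mulVec_le_opNorm {n : ℕ} (M : Matrix (Fin n) (Fin n) ℝ) (u : Fin n → ℝ) :
    |u ⬝ᵥ M *ᵥ u| ≤ opNorm M * ∑ k, u k ^ 2 := by
  set v := WithLp.toLp 2 u
  have hinner : inner ℝ v (toEuclideanCLM (𝕜 := ℝ) M v) = u ⬝ᵥ M *ᵥ u := by
    rw [toEuclideanCLM_toLp, EuclideanSpace.inner_eq_star_dotProduct, dotProduct_comm]
    rfl
  calc |u ⬝ᵥ M *ᵥ u| ≤ ‖v‖ * ‖toEuclideanCLM (𝕜 := ℝ) M v‖ := hinner ▸ abs_real_inner_le_norm _ _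
    _ ≤ ‖v‖ * (opNorm M * ‖v‖) := by gcongr; exact (toEuclideanCLM (𝕜 := ℝ) M).le_opNorm v
    _ = opNorm M * ∑ k, u k ^ 2 := by rw [← EuclideanSpace.real_norm_sq_eq v]; ring

theorem abs_dotProduct_mulVec_le_of_eq_zero_off_pair {n : ℕ} (D : Matrix (Fin n) (Fin n) ℝ)
    (i j : Fin n) (hji : D j i = D i j)
    (hD : ∀ k l, ¬((k = i ∧ l = j) ∨ (k = j ∧ l = i)) → D k l = 0) (u : Fin n → ℝ) :
    |u ⬝ᵥ D *ᵥ u| ≤ 2 * |u i| * |u j| * |D i j| := by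
  set S : Finset (Fin n × Fin n) := {(i, j), (j, i)}
  have hsum : u ⬝ᵥ D *ᵥ u = ∑ p ∈ S, u p.1 * D p.1 p.2 * u p.2 := by
    rw [Finset.sum_subset (Finset.subset_univ S), Fintype.sum_prod_type]
    · simp only [dotProduct, mulVec, Finset.mul_sum, mul_assoc]
    · rintro ⟨k, l⟩ - hkl
      simp only [S, Finset.mem_insert, Finset.mem_singleton, Prod.mk.injEq] at hkl
      simp [hD k l hkl]
  have hterm : ∀ p ∈ S, |u p.1 * D p.1 p.2 * u p.2| = |u i| * |u j| * |D i j| := by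
    simp only [S, Finset.mem_insert, Finset.mem_singleton]
    rintro _ (rfl | rfl) <;> simp only [abs_mul, hji] <;> ring
  calc |u ⬝ᵥ D *ᵥ u| ≤ ∑ p ∈ S, |u p.1 * D p.1 p.2 * u p.2| := hsum ▸ Finset.abs_sum_le_sum_abs _ _
    _ ≤ S.card • (|u i| * |u j| * |D i j|) :=
        Finset.sum_le_card_nsmul _ _ _ fun p hp => (hterm p hp).le
    _ ≤ 2 * |u i| * |u j| * |D i j| := by
        rw [nsmul_eq_mul, mul_assoc, mul_assoc, mul_assoc]
        gcongr
        exact_mod_cast Finset.card_le_two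

theorem stmt_15_general {n : ℕ} (A A' : Matrix (Fin n) (Fin n) ℝ)
    (hA : A.IsSymm) (hA' : A'.IsSymm)
    (i j : Fin n)
    (hsame : ∀ k l, ¬((k = i ∧ l = j) ∨ (k = j ∧ l = i)) → A' k l = A k l)
    (u1 : Fin n → ℝ) (hu : ∑ k, u1 k ^ 2 = 1)
    (lam : ℝ) (hlam : |lam| = opNorm A) (heig : A.mulVec u1 = lam • u1) :
    opNorm A - opNorm A' ≤ 2 * |u1 i| * |u1 j| * |A i j - A' i j| := by
  have hA_quad : u1 ⬝ᵥ A *ᵥ u1 = lam := by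
    have hunit : u1 ⬝ᵥ u1 = 1 := by simpa only [dotProduct, sq] using hu
    rw [heig, dotProduct_smul, hunit, smul_eq_mul, mul_one]
  have hA'_quad : |u1 ⬝ᵥ A' *ᵥ u1| ≤ opNorm A' := by
    simpa only [hu, mul_one] using abs_dotProduct_mulVec_le_opNorm A' u1
  have hdiff := abs_dotProduct_mulVec_le_of_eq_zero_off_pair (A - A') i j
    (by simp only [Matrix.sub_apply, hA.apply, hA'.apply])
    (fun k l hkl => by simp [hsame k l hkl]) u1
  rw [sub_mulVec, dotProduct_sub, Matrix.sub_apply] at hdiff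
  calc opNorm A - opNorm A' ≤ |u1 ⬝ᵥ A *ᵥ u1| - |u1 ⬝ᵥ A' *ᵥ u1| := by rw [hA_quad, hlam]; linarith
    _ ≤ |u1 ⬝ᵥ A *ᵥ u1 - u1 ⬝ᵥ A' *ᵥ u1| := abs_sub_abs_le_abs_sub _ _
    _ ≤ 2 * |u1 i| * |u1 j| * |A i j - A' i j| := hdiff

/-- One-entry (symmetric) perturbation bound for the spectral norm:
if `A'` agrees with `A` except at entries `(i,j)` and `(j,i)` and `u₁` is a unit
eigenvector of `A` for its largest-in-absolute-value eigenvalue, then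
`‖A‖ - ‖A'‖ ≤ 2|u₁ᵢ||u₁ⱼ||Aᵢⱼ - A'ᵢⱼ|`. -/
theorem stmt_15 {n : ℕ} (A A' : Matrix (Fin n) (Fin n) ℝ)
    (hA : A.IsSymm) (hA' : A'.IsSymm)
    (hAent : ∀ k l, A k l ∈ Set.Icc (0 : ℝ) 1)
    (hA'ent : ∀ k l, A' k l ∈ Set.Icc (0 : ℝ) 1)
    (i j : Fin n) (hij : i < j)
    (hsame : ∀ k l, ¬((k = i ∧ l = j) ∨ (k = j ∧ l = i)) → A' k l = A k l)
    (u1 : Fin n → ℝ) (hu : ∑ k, u1 k ^ 2 = 1)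
    (lam : ℝ) (hlam : |lam| = opNorm A) (heig : A.mulVec u1 = lam • u1) :
    opNorm A - opNorm A' ≤ 2 * |u1 i| * |u1 j| * |A i j - A' i j| :=
  stmt_15_general A A' hA hA' i j hsame u1 hu lam hlam heig
end

section
/- Let $U, U^* \in \mathbb{R}^{n\times r}$ have orthonormal columns and let $O \in \mathbb{R}^{r\times r}$ be orthogonal. Then $\|UU^T - U^*(U^*)^T\|_{2\to\infty} \le (\sqrt{n}\|U^*\|_{2\to\infty} + 1)\|UO - U^*\|_{2\to\infty}$, where $\|M\|_{2\to\infty} = \max_k \|M_k\|_2$ is the maximum row $\ell_2$ norm. -/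
/-!
Write `D = UO - U*` and `V = UO`. Since `OOᵀ = 1`, `UUᵀ = VVᵀ`, so
`UUᵀ - U*U*ᵀ = D Vᵀ + U* Dᵀ`. The columns of `V` are orthonormal, so `v ↦ V v` is an isometry
and the rows of `D Vᵀ` have the same lengths as those of `D`. Each entry of `U* Dᵀ` is an inner
product of a row of `U*` with a row of `D`, so by Cauchy–Schwarz every row of `U* Dᵀ` (which has
`n` entries) has length at most `√n ‖U*‖_{2→∞} ‖D‖_{2→∞}`.
-/

open Matrix

/-- The two-to-infinity norm: the maximum ℓ² norm of a row. -/
noncomputable def twoToInfNorm {n r : ℕ} (M : Matrix (Fin n) (Fin r) ℝ) : ℝ :=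
  ⨆ k, Real.sqrt (∑ j, M k j ^ 2)

section

variable {n m r : ℕ}

lemma sqrt_sum_sq_eq_norm_toLp (v : Fin r → ℝ) : √(∑ j, v j ^ 2) = ‖WithLp.toLp 2 v‖ := by
  simp [EuclideanSpace.norm_eq, Real.norm_eq_abs, sq_abs]

lemma norm_toLp_mulVec_of_transpose_mul_self_eq_one {V : Matrix (Fin m) (Fin r) ℝ}
    (hV : Vᵀ * V = 1) (x : Fin r → ℝ) : ‖WithLp.toLp 2 (V *ᵥ x)‖ = ‖WithLp.toLp 2 x‖ := by
  have hdot : V *ᵥ x ⬝ᵥ V *ᵥ x = x ⬝ᵥ x := by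
    rw [dotProduct_mulVec, ← vecMul_transpose, vecMul_vecMul, ← mulVec_transpose,
      transpose_mul, transpose_transpose, hV, one_mulVec, dotProduct_comm]
  simp only [← sqrt_sum_sq_eq_norm_toLp, sq, ← dotProduct.eq_1, hdot]

lemma norm_toLp_le_sqrt_card_mul {v : Fin r → ℝ} {c : ℝ} (hc : 0 ≤ c) (h : ∀ j, |v j| ≤ c) :
    ‖WithLp.toLp 2 v‖ ≤ √r * c := by
  have hsq : ∀ j, v j ^ 2 ≤ c ^ 2 := fun j => sq_le_sq' (abs_le.mp (h j)).1 (abs_le.mp (h j)).2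
  calc ‖WithLp.toLp 2 v‖ = √(∑ j, v j ^ 2) := (sqrt_sum_sq_eq_norm_toLp v).symm
    _ ≤ √(∑ _j : Fin r, c ^ 2) := Real.sqrt_le_sqrt (Finset.sum_le_sum fun j _ => hsq j)
    _ = √r * c := by
      rw [Finset.sum_const, Finset.card_univ, Fintype.card_fin, nsmul_eq_mul,
        Real.sqrt_mul (Nat.cast_nonneg r), Real.sqrt_sq hc]

lemma mul_transpose_apply_eq_inner (A : Matrix (Fin n) (Fin r) ℝ)
    (B : Matrix (Fin m) (Fin r) ℝ) (k : Fin n) (j : Fin m) :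
    (A * Bᵀ) k j = inner ℝ (WithLp.toLp 2 (A k)) (WithLp.toLp 2 (B j)) := by
  simp [mul_apply, EuclideanSpace.inner_toLp_toLp, dotProduct, mul_comm]

lemma mul_transpose_sub_mul_transpose_eq (U W : Matrix (Fin n) (Fin r) ℝ)
    {O : Matrix (Fin r) (Fin r) ℝ} (hO : O * Oᵀ = 1) :
    U * Uᵀ - W * Wᵀ = (U * O - W) * (U * O)ᵀ + W * (U * O - W)ᵀ := by
  have hUO : U * O * (U * O)ᵀ = U * Uᵀ := by
    rw [transpose_mul, Matrix.mul_assoc, ← Matrix.mul_assoc O, hO, Matrix.one_mul]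
  rw [Matrix.sub_mul, transpose_sub, Matrix.mul_sub, hUO]
  abel

namespace twoToInfNorm

lemma eq_iSup_norm_row (M : Matrix (Fin n) (Fin r) ℝ) :
    twoToInfNorm M = ⨆ k, ‖WithLp.toLp 2 (M k)‖ := by
  simp only [twoToInfNorm, sqrt_sum_sq_eq_norm_toLp]

lemma nonneg (M : Matrix (Fin n) (Fin r) ℝ) : 0 ≤ twoToInfNorm M :=
  Real.iSup_nonneg fun _ => Real.sqrt_nonneg _

lemma norm_row_le (M : Matrix (Fin n) (Fin r) ℝ) (k : Fin n) :
    ‖WithLp.toLp 2 (M k)‖ ≤ twoToInfNorm M := by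
  rw [eq_iSup_norm_row]
  exact le_ciSup (f := fun k => ‖WithLp.toLp 2 (M k)‖) (Finite.bddAbove_range _) k

lemma le_of_norm_row_le {M : Matrix (Fin n) (Fin r) ℝ} {c : ℝ} (hc : 0 ≤ c)
    (h : ∀ k, ‖WithLp.toLp 2 (M k)‖ ≤ c) : twoToInfNorm M ≤ c := by
  rw [eq_iSup_norm_row]
  exact Real.iSup_le h hc

lemma add_le (A B : Matrix (Fin n) (Fin r) ℝ) :
    twoToInfNorm (A + B) ≤ twoToInfNorm A + twoToInfNorm B :=
  le_of_norm_row_le (add_nonneg (nonneg A) (nonneg B)) fun k =>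
    (norm_add_le (WithLp.toLp 2 (A k)) (WithLp.toLp 2 (B k))).trans
      (add_le_add (norm_row_le A k) (norm_row_le B k))

lemma mul_transpose_of_transpose_mul_self_eq_one (D : Matrix (Fin n) (Fin r) ℝ)
    {V : Matrix (Fin m) (Fin r) ℝ} (hV : Vᵀ * V = 1) :
    twoToInfNorm (D * Vᵀ) = twoToInfNorm D := by
  simp only [eq_iSup_norm_row, mul_apply_eq_vecMul, vecMul_transpose,
    norm_toLp_mulVec_of_transpose_mul_self_eq_one hV]

lemma mul_transpose_le (A : Matrix (Fin n) (Fin r) ℝ) (B : Matrix (Fin m) (Fin r) ℝ) :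
    twoToInfNorm (A * Bᵀ) ≤ √m * (twoToInfNorm A * twoToInfNorm B) := by
  have hAB := mul_nonneg (nonneg A) (nonneg B)
  refine le_of_norm_row_le (mul_nonneg (Real.sqrt_nonneg _) hAB) fun k =>
    norm_toLp_le_sqrt_card_mul hAB fun j => ?_
  rw [mul_transpose_apply_eq_inner]
  exact (abs_real_inner_le_norm _ _).trans
    (mul_le_mul (norm_row_le A k) (norm_row_le B j) (norm_nonneg _) (nonneg A))

end twoToInfNorm

end

theorem stmt_19_general {n r : ℕ} (U Ustar : Matrix (Fin n) (Fin r) ℝ)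
    (O : Matrix (Fin r) (Fin r) ℝ)
    (hU : Uᵀ * U = 1)
    (hO : Oᵀ * O = 1) (hO' : O * Oᵀ = 1) :
    twoToInfNorm (U * Uᵀ - Ustar * Ustarᵀ) ≤
      (Real.sqrt n * twoToInfNorm Ustar + 1) * twoToInfNorm (U * O - Ustar) := by
  have hUO : (U * O)ᵀ * (U * O) = 1 := by
    rw [transpose_mul, Matrix.mul_assoc, ← Matrix.mul_assoc Uᵀ, hU, Matrix.one_mul, hO]
  rw [mul_transpose_sub_mul_transpose_eq U Ustar hO']
  calc _ ≤ twoToInfNorm ((U * O - Ustar) * (U * O)ᵀ) +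
          twoToInfNorm (Ustar * (U * O - Ustar)ᵀ) := twoToInfNorm.add_le _ _
    _ ≤ twoToInfNorm (U * O - Ustar) +
          √n * (twoToInfNorm Ustar * twoToInfNorm (U * O - Ustar)) :=
        add_le_add (twoToInfNorm.mul_transpose_of_transpose_mul_self_eq_one _ hUO).le
          (twoToInfNorm.mul_transpose_le _ _)
    _ = (Real.sqrt n * twoToInfNorm Ustar + 1) * twoToInfNorm (U * O - Ustar) := by ring

/-- For `U, U*` with orthonormal columns and `O` orthogonal,
`‖UUᵀ - U*(U*)ᵀ‖_{2→∞} ≤ (√n ‖U*‖_{2→∞} + 1) ‖UO - U*‖_{2→∞}`. -/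
theorem stmt_19 {n r : ℕ} (U Ustar : Matrix (Fin n) (Fin r) ℝ)
    (O : Matrix (Fin r) (Fin r) ℝ)
    (hU : Uᵀ * U = 1) (hUstar : Ustarᵀ * Ustar = 1)
    (hO : Oᵀ * O = 1) (hO' : O * Oᵀ = 1) :
    twoToInfNorm (U * Uᵀ - Ustar * Ustarᵀ) ≤
      (Real.sqrt n * twoToInfNorm Ustar + 1) * twoToInfNorm (U * O - Ustar) :=
  stmt_19_general U Ustar O hU hO hO'
end
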